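/- arXiv:2510.02477 — 2 statements merged into one kernel-verified Lean document; each statement's English description precedes it below -/
import Mathlib

section
/- Let m > 1 and F(z) = (1 + |z|^m)^{1/m} for z ∈ R^n with z ≠ 0 when m < 2. Then for all ξ ∈ R^n: min{m−1,1} |z|^{m−2} |ξ|^2 / (1+|z|^m)^{2−1/m} ≤ ⟨∂_{zz}F(z)ξ, ξ⟩ ≤ max{m−1,1} |z|^{m−2} |ξ|^2 / (1+|z|^m)^{1−1/m}. -/
/-!
The gradient of `F(w) = (1 + |w|^m)^{1/m}` is `g(|w|) w` with `g(r) = (1 + r^m)^{1/m-1} r^{m-2}`,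
so for `z ≠ 0` the Hessian form is `g(r)|ξ|² + (g'(r)/r)⟨z,ξ⟩²`, `r = |z|`, which factors as
`(1 + r^m)^{1/m-2} r^{m-2} [(1 + r^m)|ξ|² + ((m-2) - r^m) σ]` with `σ = ⟨z/r, ξ⟩² ∈ [0, |ξ|²]`.
The bracket equals `(1 + r^m)(|ξ|² - σ) + (m-1)σ`, hence lies between `min(m-1,1)|ξ|²` and
`max(m-1,1)(1 + r^m)|ξ|²`. At `z = 0` (where `m ≥ 2`) the coefficient `g` is continuous, so the
Hessian is `g(0) = 0^{m-2}` times the identity, which is the same formula with `σ = 0`.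
-/

open Real Topology Asymptotics
open scoped RealInnerProductSpace

variable {E : Type*} [NormedAddCommGroup E] [InnerProductSpace ℝ E]

theorem hasFDerivAt_norm_of_ne_zero {z : E} (hz : z ≠ 0) :
    HasFDerivAt (‖·‖) (‖z‖⁻¹ • innerSL ℝ z) z := by
  have h := (hasStrictFDerivAt_norm_sq z).hasFDerivAt.sqrt (by positivity)
  simp only [sqrt_sq (norm_nonneg _)] at h
  convert h using 1
  ext ξ
  simp only [smul_apply, coe_innerSL_apply, smul_eq_mul, one_div,
    mul_inv_rev, nsmul_eq_mul, Nat.cast_ofNat]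
  field_simp

theorem HasDerivAt.fderiv_smul_innerSL_norm_apply {g : ℝ → ℝ} {g' : ℝ} {z : E} (hz : z ≠ 0)
    (hg : HasDerivAt g g' ‖z‖) (ξ η : E) :
    fderiv ℝ (fun w : E => g ‖w‖ • innerSL ℝ w) z ξ η =
      g ‖z‖ * ⟪ξ, η⟫ + g' / ‖z‖ * ⟪z, ξ⟫ * ⟪z, η⟫ := by
  have h : HasFDerivAt (fun w : E => g ‖w‖ • innerSL ℝ w) _ z :=
    (hg.comp_hasFDerivAt z (hasFDerivAt_norm_of_ne_zero hz)).smul (innerSL ℝ (E := E)).hasFDerivAt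
  rw [h.fderiv]
  simp only [Function.comp_apply, add_apply, smul_apply,
    ContinuousLinearMap.smulRight_apply, coe_innerSL_apply, smul_eq_mul]
  -- `innerSL ℝ` is typed as `starRingEnd ℝ`-semilinear, so `simp` cannot evaluate it here
  change g ‖z‖ * ⟪ξ, η⟫ + _ = _
  ring

theorem ContinuousAt.hasFDerivAt_smul_innerSL_norm_zero {g : ℝ → ℝ} (hg : ContinuousAt g 0) :
    HasFDerivAt (fun w : E => g ‖w‖ • innerSL ℝ w) (g 0 • innerSL ℝ) (0 : E) := by
  refine .of_isLittleO ?_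
  have hg' : (fun w : E => g ‖w‖ - g 0) =o[𝓝 0] fun _ => (1 : ℝ) := by
    rw [isLittleO_one_iff, tendsto_sub_nhds_zero_iff]
    exact hg.tendsto.comp tendsto_norm_zero
  simpa [sub_smul] using hg'.smul_isBigO ((innerSL ℝ (E := E)).isBigO_id (𝓝 0))

noncomputable def mAreaIntegrand (m : ℝ) (w : E) : ℝ := (1 + ‖w‖ ^ m) ^ (1 / m)

noncomputable def mAreaGradCoeff (m r : ℝ) : ℝ := (1 + r ^ m) ^ (1 / m - 1) * r ^ (m - 2)

theorem hasFDerivAt_mAreaIntegrand {m : ℝ} (hm : 1 < m) (w : E) :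
    HasFDerivAt (mAreaIntegrand m) (mAreaGradCoeff m ‖w‖ • innerSL ℝ w) w := by
  have hK : 0 < 1 + ‖w‖ ^ m := by positivity
  refine (((hasFDerivAt_norm_rpow w hm).const_add 1).rpow_const (p := 1 / m)
    (.inl hK.ne')).congr_fderiv ?_
  rw [mAreaGradCoeff, smul_smul]
  congr 1
  field_simp

theorem fderiv_mAreaIntegrand {m : ℝ} (hm : 1 < m) :
    fderiv ℝ (mAreaIntegrand m) = fun w : E => mAreaGradCoeff m ‖w‖ • innerSL ℝ w :=
  funext fun w => (hasFDerivAt_mAreaIntegrand hm w).fderiv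

theorem hasDerivAt_mAreaGradCoeff {m r : ℝ} (hm : m ≠ 0) (hr : 0 < r) :
    HasDerivAt (mAreaGradCoeff m)
      ((1 + r ^ m) ^ (1 / m - 2) * r ^ (m - 3) * ((m - 2) - r ^ m)) r := by
  have hK : 0 < 1 + r ^ m := by positivity
  have h := (((hasDerivAt_rpow_const (p := m) (.inl hr.ne')).const_add 1).rpow_const
    (p := 1 / m - 1) (.inl hK.ne')).mul (hasDerivAt_rpow_const (p := m - 2) (.inl hr.ne'))
  refine h.congr_deriv ?_
  have hpow : ∀ k : ℕ, r ^ (m - 3 + k) = r ^ (m - 3) * r ^ k := rpow_add_natCast hr.ne' _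
  have h1 : r ^ (m - 1) = r ^ (m - 3) * r ^ 2 := by rw [← hpow]; norm_num; ring_nf
  have h2 : r ^ (m - 2) = r ^ (m - 3) * r := by rw [← rpow_add_one hr.ne']; ring_nf
  have h3 : r ^ m = r ^ (m - 3) * r ^ 3 := by rw [← hpow]; norm_num
  rw [show 1 / m - 1 - 1 = 1 / m - 2 by ring, show 1 / m - 1 = 1 / m - 2 + 1 by ring,
    rpow_add_one hK.ne', show m - 2 - 1 = m - 3 by ring, h1, h2, h3]
  field_simp
  ring

theorem mAreaGradCoeff_zero {m : ℝ} (hm : m ≠ 0) : mAreaGradCoeff m 0 = 0 ^ (m - 2) := by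
  simp [mAreaGradCoeff, zero_rpow hm]

theorem continuousAt_mAreaGradCoeff_zero {m : ℝ} (hm : 2 ≤ m) :
    ContinuousAt (mAreaGradCoeff m) 0 := by
  unfold mAreaGradCoeff
  fun_prop (disch := first | positivity | (left; positivity) | (right; linarith))

/-- At `z = 0` the junk value `⟪z, ξ⟫ / ‖z‖ = 0` makes the right side `0 ^ (m - 2) * ‖ξ‖ ^ 2`. -/
theorem iteratedFDeriv_two_mAreaIntegrand_apply {m : ℝ} (hm : 1 < m) {z : E}
    (hz : z ≠ 0 ∨ 2 ≤ m) (ξ : E) :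
    iteratedFDeriv ℝ 2 (mAreaIntegrand m) z ![ξ, ξ] =
      (1 + ‖z‖ ^ m) ^ (1 / m - 2) * ‖z‖ ^ (m - 2) *
        ((1 + ‖z‖ ^ m) * ‖ξ‖ ^ 2 + ((m - 2) - ‖z‖ ^ m) * (⟪z, ξ⟫ / ‖z‖) ^ 2) := by
  have hm0 : m ≠ 0 := by positivity
  rw [iteratedFDeriv_two_apply, fderiv_mAreaIntegrand hm]
  simp only [Matrix.cons_val_zero, Matrix.cons_val_one]
  rcases eq_or_ne z 0 with rfl | hz0
  · have h2m : 2 ≤ m := hz.resolve_left (not_not.2 rfl)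
    rw [(continuousAt_mAreaGradCoeff_zero h2m).hasFDerivAt_smul_innerSL_norm_zero.fderiv]
    change mAreaGradCoeff m 0 * ⟪ξ, ξ⟫ = _
    simp [mAreaGradCoeff_zero hm0, zero_rpow hm0]
  · have hr : 0 < ‖z‖ := norm_pos_iff.2 hz0
    have hK : 0 < 1 + ‖z‖ ^ m := by positivity
    rw [(hasDerivAt_mAreaGradCoeff hm0 hr).fderiv_smul_innerSL_norm_apply hz0,
      real_inner_self_eq_norm_sq, mAreaGradCoeff, show 1 / m - 1 = 1 / m - 2 + 1 by ring,
      rpow_add_one hK.ne', show m - 2 = m - 3 + 1 by ring, rpow_add_one hr.ne']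
    field_simp

theorem sq_inner_div_norm_le (z ξ : E) : (⟪z, ξ⟫ / ‖z‖) ^ 2 ≤ ‖ξ‖ ^ 2 := by
  rw [div_pow]
  refine div_le_of_le_mul₀ (by positivity) (by positivity) ?_
  calc ⟪z, ξ⟫ ^ 2 = |⟪z, ξ⟫| ^ 2 := (sq_abs _).symm
    _ ≤ (‖z‖ * ‖ξ‖) ^ 2 := by gcongr; exact abs_real_inner_le_norm z ξ
    _ = ‖ξ‖ ^ 2 * ‖z‖ ^ 2 := by ring

theorem mArea_hessian_bracket_bounds {m a σ X : ℝ} (hm : 1 < m) (ha : 0 ≤ a) (hσ : 0 ≤ σ)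
    (hσX : σ ≤ X) :
    min (m - 1) 1 * X ≤ (1 + a) * X + ((m - 2) - a) * σ ∧
      (1 + a) * X + ((m - 2) - a) * σ ≤ max (m - 1) 1 * ((1 + a) * X) := by
  have hmin₁ := min_le_left (m - 1) 1
  have hmin₂ := min_le_right (m - 1) 1
  have hmax₁ := le_max_left (m - 1) 1
  have hmax₂ := le_max_right (m - 1) 1
  constructor
  · nlinarith [mul_nonneg ha (sub_nonneg.2 hσX)]
  · nlinarith [mul_nonneg ha (sub_nonneg.2 hσX), mul_nonneg ha hσ]

theorem mAreaIntegrand_hessian_bounds {m : ℝ} (hm : 1 < m) {z : E} (hz : z ≠ 0 ∨ 2 ≤ m)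
    (ξ : E) :
    min (m - 1) 1 * ‖z‖ ^ (m - 2) * ‖ξ‖ ^ 2 / (1 + ‖z‖ ^ m) ^ (2 - 1 / m) ≤
      iteratedFDeriv ℝ 2 (mAreaIntegrand m) z ![ξ, ξ] ∧
    iteratedFDeriv ℝ 2 (mAreaIntegrand m) z ![ξ, ξ] ≤
      max (m - 1) 1 * ‖z‖ ^ (m - 2) * ‖ξ‖ ^ 2 / (1 + ‖z‖ ^ m) ^ (1 - 1 / m) := by
  set K := 1 + ‖z‖ ^ m
  have hK : 0 < K := by positivity
  obtain ⟨hlow, hup⟩ := mArea_hessian_bracket_bounds (a := ‖z‖ ^ m) hm (by positivity)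
    (sq_nonneg _) (sq_inner_div_norm_le z ξ)
  have hc : 0 ≤ K ^ (1 / m - 2) * ‖z‖ ^ (m - 2) := by positivity
  have hinv₁ : K ^ (1 / m - 2) = (K ^ (2 - 1 / m))⁻¹ := by rw [← rpow_neg hK.le]; ring_nf
  have hinv₂ : K ^ (1 / m - 2) * K = (K ^ (1 - 1 / m))⁻¹ := by
    rw [← rpow_add_one hK.ne', ← rpow_neg hK.le]; ring_nf
  rw [iteratedFDeriv_two_mAreaIntegrand_apply hm hz]
  constructor
  · refine Eq.trans_le ?_ (mul_le_mul_of_nonneg_left hlow hc)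
    rw [div_eq_mul_inv _ (K ^ (2 - 1 / m)), ← hinv₁]; ring
  · refine (mul_le_mul_of_nonneg_left hup hc).trans_eq ?_
    rw [div_eq_mul_inv _ (K ^ (1 - 1 / m)), ← hinv₂]; ring

/-- For `m > 1`, the integrand `F(z) = (1+|z|^m)^{1/m}` (with `z ≠ 0` when `m < 2`)
satisfies the anisotropic Hessian bounds
`min{m−1,1}|z|^{m−2}|ξ|²/(1+|z|^m)^{2−1/m} ≤ ⟨∂_{zz}F(z)ξ,ξ⟩ ≤
 max{m−1,1}|z|^{m−2}|ξ|²/(1+|z|^m)^{1−1/m}`. -/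
theorem m_area_integrand_hessian_bounds (n : ℕ) (m : ℝ) (hm : 1 < m)
    (z : EuclideanSpace ℝ (Fin n)) (hz : m < 2 → z ≠ 0) (ξ : EuclideanSpace ℝ (Fin n)) :
    min (m - 1) 1 * ‖z‖ ^ (m - 2) * ‖ξ‖ ^ 2 / (1 + ‖z‖ ^ m) ^ (2 - 1 / m) ≤
      iteratedFDeriv ℝ 2
        (fun w : EuclideanSpace ℝ (Fin n) => (1 + ‖w‖ ^ m) ^ (1 / m)) z ![ξ, ξ] ∧
    iteratedFDeriv ℝ 2
        (fun w : EuclideanSpace ℝ (Fin n) => (1 + ‖w‖ ^ m) ^ (1 / m)) z ![ξ, ξ] ≤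
      max (m - 1) 1 * ‖z‖ ^ (m - 2) * ‖ξ‖ ^ 2 / (1 + ‖z‖ ^ m) ^ (1 - 1 / m) := by
  exact mAreaIntegrand_hessian_bounds hm ((lt_or_ge m 2).imp hz id) ξ
end

section
/- For the double phase integrand F(x,z) = |z|^p + a(x)|z|^q with 1 < p ≤ q and a : Ω → [0,∞), for a ball B ⊂ Ω the nonlocal ellipticity ratio satisfies R̄_F(z,B) ≤ C(p,q)(1 + ‖a‖_{L^∞(B)} |z|^{q−p}) for all |z| ≥ 1; moreover if a vanishes at some point of the closure of B, then ‖a‖_{L^∞(B)} |z|^{q−p} ≤ C'(p,q) R̄_F(z,B) for |z| ≥ 1. -/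
/-!
For `z ≠ 0` the Hessian of `|z|^r` is `r|z|^(r-2) (I + (r-2) ẑ⊗ẑ)`, so on unit vectors it lies
between `λ_r |z|^(r-2)` and `Λ_r |z|^(r-2)`, with `λ_r = r min(1, r-1)` and `Λ_r = r max(1, r-1)`.
Over `x ∈ B` the supremum of the Hessian form of `F` is therefore at most
`(Λ_p + Λ_q ‖a‖_∞ |z|^(q-p)) |z|^(p-2)` and the infimum at least `λ_p |z|^(p-2)`, which is the
upper bound. Conversely the supremum is at least `‖a‖_∞ λ_q |z|^(q-2)`, while the infimum is at
most `Λ_p |z|^(p-2) + a(x) Λ_q |z|^(q-2)` for every `x ∈ B`; if `a` vanishes on `closure B`,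
continuity lets `a(x) → 0`, so the infimum is at most `Λ_p |z|^(p-2)`.
-/

open Set RealInnerProductSpace

section ValueSet

variable {X Y : Type*} {s : Set X} {P : Y → Prop} {F : X → Y → ℝ} {a : X → ℝ} {α β γ δ : ℝ}

def valueSet (s : Set X) (P : Y → Prop) (F : X → Y → ℝ) : Set ℝ :=
  {t | ∃ x ∈ s, ∃ y, P y ∧ t = F x y}

lemma valueSet_nonempty (hs : s.Nonempty) (hP : ∃ y, P y) : (valueSet s P F).Nonempty := by
  obtain ⟨x, hx⟩ := hs
  obtain ⟨y, hy⟩ := hP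
  exact ⟨F x y, x, hx, y, hy, rfl⟩

lemma le_csInf_valueSet (hs : s.Nonempty) (hP : ∃ y, P y)
    (hlow : ∀ x ∈ s, ∀ y, P y → α ≤ F x y) : α ≤ sInf (valueSet s P F) :=
  le_csInf (valueSet_nonempty hs hP) (by rintro _ ⟨x, hx, y, hy, rfl⟩; exact hlow x hx y hy)

lemma add_sSup_image_mul_mem_upperBounds_valueSet (hδ : 0 ≤ δ) (ha : BddAbove (a '' s))
    (hup : ∀ x ∈ s, ∀ y, P y → F x y ≤ β + a x * δ) :
    β + sSup (a '' s) * δ ∈ upperBounds (valueSet s P F) := by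
  rintro _ ⟨x, hx, y, hy, rfl⟩
  exact (hup x hx y hy).trans (by gcongr; exact le_csSup ha (mem_image_of_mem a hx))

lemma sSup_div_sInf_valueSet_le (hα : 0 < α) (hδ : 0 ≤ δ) (hs : s.Nonempty)
    (hP : ∃ y, P y) (ha : BddAbove (a '' s)) (hlow : ∀ x ∈ s, ∀ y, P y → α ≤ F x y)
    (hup : ∀ x ∈ s, ∀ y, P y → F x y ≤ β + a x * δ) :
    sSup (valueSet s P F) / sInf (valueSet s P F) ≤ (β + sSup (a '' s) * δ) / α := by
  have hle := add_sSup_image_mul_mem_upperBounds_valueSet hδ ha hup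
  obtain ⟨x, hx⟩ := hs
  obtain ⟨y, hy⟩ := hP
  have hmem : F x y ∈ valueSet s P F := ⟨x, hx, y, hy, rfl⟩
  exact div_le_div₀ (hα.le.trans ((hlow x hx y hy).trans (hle hmem))) (csSup_le ⟨_, hmem⟩ hle) hα
    (le_csInf_valueSet ⟨x, hx⟩ ⟨y, hy⟩ hlow)

lemma sSup_image_mul_div_le_sSup_div_sInf_valueSet (hα : 0 < α) (hγ : 0 < γ)
    (hδ : 0 ≤ δ) (hs : s.Nonempty) (hP : ∃ y, P y) (ha : BddAbove (a '' s))
    (ha₀ : (0 : ℝ) ∈ closure (a '' s)) (hlow : ∀ x ∈ s, ∀ y, P y → α ≤ F x y)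
    (hlow' : ∀ x ∈ s, ∀ y, P y → a x * γ ≤ F x y)
    (hup : ∀ x ∈ s, ∀ y, P y → F x y ≤ β + a x * δ) :
    sSup (a '' s) * γ / β ≤ sSup (valueSet s P F) / sInf (valueSet s P F) := by
  obtain ⟨y, hy⟩ := hP
  have hne := valueSet_nonempty (F := F) hs ⟨y, hy⟩
  have hbdd : BddAbove (valueSet s P F) :=
    ⟨_, add_sSup_image_mul_mem_upperBounds_valueSet hδ ha hup⟩
  have hbddBelow : BddBelow (valueSet s P F) := by
    refine ⟨α, ?_⟩
    rintro _ ⟨x, hx, y, hy, rfl⟩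
    exact hlow x hx y hy
  have hsup : sSup (a '' s) * γ ≤ sSup (valueSet s P F) := by
    rw [← le_div_iff₀ hγ]
    refine csSup_le (hs.image a) ?_
    rintro _ ⟨x, hx, rfl⟩
    rw [le_div_iff₀ hγ]
    exact (hlow' x hx y hy).trans (le_csSup hbdd ⟨x, hx, y, hy, rfl⟩)
  have hinf_pos : 0 < sInf (valueSet s P F) := hα.trans_le (le_csInf_valueSet hs ⟨y, hy⟩ hlow)
  -- `sInf ≤ β + t δ` on `a '' s`, hence on its closure, which contains `0`.
  have hinf_le : sInf (valueSet s P F) ≤ β := by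
    have h : a '' s ⊆ {t | sInf (valueSet s P F) ≤ β + t * δ} := by
      rintro _ ⟨x, hx, rfl⟩
      exact (csInf_le hbddBelow ⟨x, hx, y, hy, rfl⟩).trans (hup x hx y hy)
    simpa using closure_minimal h (isClosed_le continuous_const (by fun_prop)) ha₀
  exact div_le_div₀ (hinf_pos.le.trans (csInf_le_csSup hne hbddBelow hbdd)) hsup hinf_pos hinf_le

end ValueSet

section NormRpow

variable {E : Type*} [NormedAddCommGroup E] [InnerProductSpace ℝ E]

def minEigConst (p : ℝ) : ℝ := p * min 1 (p - 1)

def maxEigConst (p : ℝ) : ℝ := p * max 1 (p - 1)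

lemma minEigConst_pos {p : ℝ} (hp : 1 < p) : 0 < minEigConst p :=
  mul_pos (by linarith) (lt_min one_pos (by linarith))

lemma minEigConst_nonneg {p : ℝ} (hp : 1 ≤ p) : 0 ≤ minEigConst p :=
  mul_nonneg (by linarith) (le_min zero_le_one (by linarith))

lemma maxEigConst_pos {p : ℝ} (hp : 0 < p) : 0 < maxEigConst p :=
  mul_pos hp (one_pos.trans_le (le_max_left _ _))

theorem hasFDerivAt_norm_rpow_of_ne_zero (p : ℝ) {x : E} (hx : x ≠ 0) :
    HasFDerivAt (fun x : E ↦ ‖x‖ ^ p) ((p * ‖x‖ ^ (p - 2)) • innerSL ℝ x) x := by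
  apply HasStrictFDerivAt.hasFDerivAt
  convert! (hasStrictFDerivAt_norm_sq x).rpow_const (p := p / 2) (by simp [hx]) using 0
  simp_rw [← Real.rpow_natCast_mul (norm_nonneg _), ← Nat.cast_smul_eq_nsmul ℝ, smul_smul]
  ring_nf

theorem iteratedFDeriv_two_norm_rpow_apply (p : ℝ) {x : E} (hx : x ≠ 0) (ξ : E) :
    iteratedFDeriv ℝ 2 (fun x : E ↦ ‖x‖ ^ p) x ![ξ, ξ] =
      p * ‖x‖ ^ (p - 2) * ‖ξ‖ ^ 2 + p * (p - 2) * ‖x‖ ^ (p - 4) * ⟪x, ξ⟫ ^ 2 := by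
  have hD : fderiv ℝ (fun x : E ↦ ‖x‖ ^ p) =ᶠ[nhds x]
      fun w ↦ (p * ‖w‖ ^ (p - 2)) • (innerSL ℝ : E →L[ℝ] E →L[ℝ] ℝ) w := by
    filter_upwards [isOpen_ne.mem_nhds hx] with w hw
    exact (hasFDerivAt_norm_rpow_of_ne_zero p hw).fderiv
  have hs : HasFDerivAt (fun w : E ↦ p * ‖w‖ ^ (p - 2))
      ((p * (p - 2) * ‖x‖ ^ (p - 4)) • innerSL ℝ x) x := by
    refine ((hasFDerivAt_norm_rpow_of_ne_zero (p - 2) hx).const_mul p).congr_fderiv ?_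
    rw [smul_smul]; ring_nf
  have hD' : HasFDerivAt (fun w ↦ (p * ‖w‖ ^ (p - 2)) • (innerSL ℝ : E →L[ℝ] E →L[ℝ] ℝ) w)
      _ x := hs.smul (innerSL ℝ : E →L[ℝ] E →L[ℝ] ℝ).hasFDerivAt
  have hξ : (innerSL ℝ : E →L[ℝ] E →L[ℝ] ℝ) ξ ξ = ‖ξ‖ ^ 2 := real_inner_self_eq_norm_sq ξ
  rw [iteratedFDeriv_two_apply, hD.fderiv_eq, hD'.fderiv]
  simp only [Matrix.cons_val_zero, Matrix.cons_val_one, Matrix.cons_val_fin_one, add_apply,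
    smul_apply, ContinuousLinearMap.smulRight_apply, innerSL_apply_apply, smul_eq_mul, hξ]
  ring

theorem iteratedFDeriv_two_norm_rpow_bounds {p : ℝ} (hp : 0 ≤ p) {x : E} (hx : x ≠ 0) (ξ : E) :
    minEigConst p * ‖x‖ ^ (p - 2) * ‖ξ‖ ^ 2 ≤
        iteratedFDeriv ℝ 2 (fun x : E ↦ ‖x‖ ^ p) x ![ξ, ξ] ∧
      iteratedFDeriv ℝ 2 (fun x : E ↦ ‖x‖ ^ p) x ![ξ, ξ] ≤
        maxEigConst p * ‖x‖ ^ (p - 2) * ‖ξ‖ ^ 2 := by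
  have hr : 0 < ‖x‖ := norm_pos_iff.mpr hx
  set v := ⟪x, ξ⟫ ^ 2 / ‖x‖ ^ 2
  have hv₀ : 0 ≤ v := by positivity
  have hv₁ : v ≤ ‖ξ‖ ^ 2 := by
    rw [div_le_iff₀ (by positivity), ← mul_pow, mul_comm]
    exact sq_le_sq' (abs_le.mp (abs_real_inner_le_norm x ξ)).1
      (abs_le.mp (abs_real_inner_le_norm x ξ)).2
  have hform : iteratedFDeriv ℝ 2 (fun x : E ↦ ‖x‖ ^ p) x ![ξ, ξ] =
      p * ‖x‖ ^ (p - 2) * (‖ξ‖ ^ 2 + (p - 2) * v) := by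
    have h4 : ‖x‖ ^ (p - 4) = ‖x‖ ^ (p - 2) / ‖x‖ ^ 2 := by
      rw [← Real.rpow_natCast, ← Real.rpow_sub hr]
      ring_nf
    rw [iteratedFDeriv_two_norm_rpow_apply p hx, h4]
    ring
  have hscalar : min 1 (p - 1) * ‖ξ‖ ^ 2 ≤ ‖ξ‖ ^ 2 + (p - 2) * v ∧
      ‖ξ‖ ^ 2 + (p - 2) * v ≤ max 1 (p - 1) * ‖ξ‖ ^ 2 := by
    rcases le_total p 2 with h | h
    · rw [min_eq_right (by linarith), max_eq_left (by linarith)]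
      constructor <;> nlinarith
    · rw [min_eq_left (by linarith), max_eq_right (by linarith)]
      constructor <;> nlinarith
  have hc : 0 ≤ p * ‖x‖ ^ (p - 2) := by positivity
  rw [hform, minEigConst, maxEigConst]
  constructor
  · nlinarith [mul_le_mul_of_nonneg_left hscalar.1 hc]
  · nlinarith [mul_le_mul_of_nonneg_left hscalar.2 hc]

theorem iteratedFDeriv_two_norm_rpow_add_mul_norm_rpow (p q c : ℝ) {x : E} (hx : x ≠ 0)
    (v : Fin 2 → E) :
    iteratedFDeriv ℝ 2 (fun w : E ↦ ‖w‖ ^ p + c * ‖w‖ ^ q) x v =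
      iteratedFDeriv ℝ 2 (fun w : E ↦ ‖w‖ ^ p) x v +
        c * iteratedFDeriv ℝ 2 (fun w : E ↦ ‖w‖ ^ q) x v := by
  have hsmooth (r : ℝ) : ContDiffAt ℝ 2 (fun w : E ↦ ‖w‖ ^ r) x :=
    (contDiffAt_norm ℝ hx).rpow_const_of_ne (norm_ne_zero_iff.mpr hx)
  have hf : (fun w : E ↦ ‖w‖ ^ p + c * ‖w‖ ^ q) =
      (fun w : E ↦ ‖w‖ ^ p) + c • fun w : E ↦ ‖w‖ ^ q := rfl
  have hg : ContDiffAt ℝ 2 (c • fun w : E ↦ ‖w‖ ^ q) x := (hsmooth q).const_smul c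
  rw [hf, iteratedFDeriv_add_apply (hsmooth p) hg,
    iteratedFDeriv_const_smul_apply (hsmooth q)]
  rfl

theorem iteratedFDeriv_two_double_phase_bounds {p q c : ℝ} (hp : 0 ≤ p) (hq : 0 ≤ q)
    (hc : 0 ≤ c) {x ξ : E} (hx : x ≠ 0) (hξ : ‖ξ‖ = 1) :
    minEigConst p * ‖x‖ ^ (p - 2) + c * (minEigConst q * ‖x‖ ^ (q - 2)) ≤
        iteratedFDeriv ℝ 2 (fun w : E ↦ ‖w‖ ^ p + c * ‖w‖ ^ q) x ![ξ, ξ] ∧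
      iteratedFDeriv ℝ 2 (fun w : E ↦ ‖w‖ ^ p + c * ‖w‖ ^ q) x ![ξ, ξ] ≤
        maxEigConst p * ‖x‖ ^ (p - 2) + c * (maxEigConst q * ‖x‖ ^ (q - 2)) := by
  have Hp := iteratedFDeriv_two_norm_rpow_bounds hp hx ξ
  have Hq := iteratedFDeriv_two_norm_rpow_bounds hq hx ξ
  simp only [hξ, one_pow, mul_one] at Hp Hq
  rw [iteratedFDeriv_two_norm_rpow_add_mul_norm_rpow p q c hx]
  exact ⟨add_le_add Hp.1 (mul_le_mul_of_nonneg_left Hq.1 hc),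
    add_le_add Hp.2 (mul_le_mul_of_nonneg_left Hq.2 hc)⟩

end NormRpow

section Ratio

variable {X E : Type*} [NormedAddCommGroup E] [InnerProductSpace ℝ E] {p q : ℝ} {s : Set X}
  {a : X → ℝ}

-- The ratio `R̄_F(z, s)` of the double phase integrand `F(x, z) = |z|^p + a(x)|z|^q`.
variable (p q s a) in
noncomputable def doublePhaseRatio (z : E) : ℝ :=
  sSup (valueSet s (fun ξ : E ↦ ‖ξ‖ = 1)
      fun x ξ ↦ iteratedFDeriv ℝ 2 (fun w : E ↦ ‖w‖ ^ p + a x * ‖w‖ ^ q) z ![ξ, ξ]) /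
    sInf (valueSet s (fun ξ : E ↦ ‖ξ‖ = 1)
      fun x ξ ↦ iteratedFDeriv ℝ 2 (fun w : E ↦ ‖w‖ ^ p + a x * ‖w‖ ^ q) z ![ξ, ξ])

lemma rpow_sub_eq_rpow_sub_mul_rpow_sub {r : ℝ} (hr : 0 < r) (p q c : ℝ) :
    r ^ (q - c) = r ^ (q - p) * r ^ (p - c) := by
  rw [← Real.rpow_add hr]
  ring_nf

variable [Nontrivial E]

lemma doublePhaseRatio_le (hp : 1 < p) (hq : 1 ≤ q) (hs : s.Nonempty) (ha : ∀ x ∈ s, 0 ≤ a x)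
    (hbdd : BddAbove (a '' s)) {z : E} (hz : z ≠ 0) :
    doublePhaseRatio p q s a z ≤
      (maxEigConst p + maxEigConst q) / minEigConst p * (1 + sSup (a '' s) * ‖z‖ ^ (q - p)) := by
  have hmp := minEigConst_pos hp
  have hMp := maxEigConst_pos (p := p) (by linarith)
  have hmq := minEigConst_nonneg hq
  have hMq := maxEigConst_pos (p := q) (by linarith)
  have hNa : 0 ≤ sSup (a '' s) * ‖z‖ ^ (q - p) := by
    obtain ⟨x, hx⟩ := hs
    exact mul_nonneg ((ha x hx).trans (le_csSup hbdd (mem_image_of_mem a hx))) (by positivity)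
  have hbounds {x} (hx : x ∈ s) {ξ : E} (hξ : ‖ξ‖ = 1) :=
    iteratedFDeriv_two_double_phase_bounds (p := p) (q := q) (by linarith) (by linarith)
      (ha x hx) hz hξ
  calc doublePhaseRatio p q s a z
    _ ≤ (maxEigConst p * ‖z‖ ^ (p - 2) + sSup (a '' s) * (maxEigConst q * ‖z‖ ^ (q - 2))) /
          (minEigConst p * ‖z‖ ^ (p - 2)) :=
      sSup_div_sInf_valueSet_le (by positivity) (by positivity) hs
        (exists_norm_eq E zero_le_one) hbdd
        (fun x hx _ hξ ↦ le_of_add_le_of_nonneg_left (hbounds hx hξ).1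
          (by have := ha x hx; positivity))
        (fun x hx _ hξ ↦ (hbounds hx hξ).2)
    _ = (maxEigConst p + maxEigConst q * (sSup (a '' s) * ‖z‖ ^ (q - p))) / minEigConst p := by
      rw [rpow_sub_eq_rpow_sub_mul_rpow_sub (norm_pos_iff.mpr hz) p q 2]
      field_simp
    _ ≤ (maxEigConst p + maxEigConst q) / minEigConst p * (1 + sSup (a '' s) * ‖z‖ ^ (q - p)) := by
      rw [div_mul_eq_mul_div]
      exact div_le_div_of_nonneg_right (by nlinarith) hmp.le

lemma le_doublePhaseRatio (hp : 1 < p) (hq : 1 < q) (hs : s.Nonempty) (ha : ∀ x ∈ s, 0 ≤ a x)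
    (hbdd : BddAbove (a '' s)) (ha₀ : (0 : ℝ) ∈ closure (a '' s)) {z : E} (hz : z ≠ 0) :
    sSup (a '' s) * ‖z‖ ^ (q - p) ≤ maxEigConst p / minEigConst q * doublePhaseRatio p q s a z := by
  have hmp := minEigConst_pos hp
  have hmq := minEigConst_pos hq
  have hMp := maxEigConst_pos (p := p) (by linarith)
  have hMq := maxEigConst_pos (p := q) (by linarith)
  have hbounds {x} (hx : x ∈ s) {ξ : E} (hξ : ‖ξ‖ = 1) :=
    iteratedFDeriv_two_double_phase_bounds (p := p) (q := q) (by linarith) (by linarith)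
      (ha x hx) hz hξ
  calc sSup (a '' s) * ‖z‖ ^ (q - p)
    _ = maxEigConst p / minEigConst q * (sSup (a '' s) * (minEigConst q * ‖z‖ ^ (q - 2)) /
          (maxEigConst p * ‖z‖ ^ (p - 2))) := by
      rw [rpow_sub_eq_rpow_sub_mul_rpow_sub (norm_pos_iff.mpr hz) p q 2]
      field_simp
    _ ≤ maxEigConst p / minEigConst q * doublePhaseRatio p q s a z := by
      gcongr
      exact sSup_image_mul_div_le_sSup_div_sInf_valueSet (by positivity) (by positivity)
        (by positivity) hs (exists_norm_eq E zero_le_one) hbdd ha₀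
        (fun x hx _ hξ ↦ le_of_add_le_of_nonneg_left (hbounds hx hξ).1
          (by have := ha x hx; positivity))
        (fun x hx _ hξ ↦ le_of_add_le_of_nonneg_right (hbounds hx hξ).1 (by positivity))
        (fun x hx _ hξ ↦ (hbounds hx hξ).2)

end Ratio

theorem double_phase_nonlocal_ellipticity_ratio_general (n : ℕ) (hn : 0 < n)
    (p q : ℝ) (hp : 1 < p) (hpq : p ≤ q)
    (a : EuclideanSpace ℝ (Fin n) → ℝ)
    (ha : ∀ x, 0 ≤ a x)
    (x₀ : EuclideanSpace ℝ (Fin n)) (ρ : ℝ) (hρ : 0 < ρ)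
    (haC : ContinuousOn a (closure (Metric.ball x₀ ρ))) :
    let B : Set (EuclideanSpace ℝ (Fin n)) := Metric.ball x₀ ρ
    let Q : EuclideanSpace ℝ (Fin n) → EuclideanSpace ℝ (Fin n) →
        EuclideanSpace ℝ (Fin n) → ℝ := fun x z ξ =>
      iteratedFDeriv ℝ 2
        (fun w : EuclideanSpace ℝ (Fin n) => ‖w‖ ^ p + a x * ‖w‖ ^ q) z ![ξ, ξ]
    let Rbar : EuclideanSpace ℝ (Fin n) → ℝ := fun z =>
      sSup {t | ∃ x ∈ B, ∃ ξ : EuclideanSpace ℝ (Fin n), ‖ξ‖ = 1 ∧ t = Q x z ξ} /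
        sInf {t | ∃ x ∈ B, ∃ ξ : EuclideanSpace ℝ (Fin n), ‖ξ‖ = 1 ∧ t = Q x z ξ}
    let Na : ℝ := sSup (a '' B)
    (∃ C : ℝ, 0 < C ∧ ∀ z : EuclideanSpace ℝ (Fin n), 1 ≤ ‖z‖ →
        Rbar z ≤ C * (1 + Na * ‖z‖ ^ (q - p))) ∧
      ((∃ x ∈ closure B, a x = 0) →
        ∃ C' : ℝ, 0 < C' ∧ ∀ z : EuclideanSpace ℝ (Fin n), 1 ≤ ‖z‖ →
          Na * ‖z‖ ^ (q - p) ≤ C' * Rbar z) := by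
  intro B Q Rbar Na
  have : Nonempty (Fin n) := ⟨⟨0, hn⟩⟩
  have hB : B.Nonempty := Metric.nonempty_ball.mpr hρ
  have hbdd : BddAbove (a '' B) :=
    ((isCompact_closedBall x₀ ρ).image_of_continuousOn (closure_ball x₀ hρ.ne' ▸ haC)).bddAbove.mono
      (image_mono Metric.ball_subset_closedBall)
  have hz {z : EuclideanSpace ℝ (Fin n)} (hz : 1 ≤ ‖z‖) : z ≠ 0 :=
    norm_pos_iff.mp (one_pos.trans_le hz)
  have hq : 1 < q := hp.trans_le hpq
  constructor
  · exact ⟨_, div_pos (add_pos (maxEigConst_pos (by linarith)) (maxEigConst_pos (by linarith)))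
      (minEigConst_pos hp), fun z h ↦ doublePhaseRatio_le hp hq.le hB (fun x _ ↦ ha x) hbdd (hz h)⟩
  · rintro ⟨x, hx, hax⟩
    have ha₀ : (0 : ℝ) ∈ closure (a '' B) := hax ▸ haC.image_closure (mem_image_of_mem a hx)
    exact ⟨_, div_pos (maxEigConst_pos (by linarith)) (minEigConst_pos hq),
      fun z h ↦ le_doublePhaseRatio hp hq hB (fun x _ ↦ ha x) hbdd ha₀ (hz h)⟩

/-- For the double phase integrand `F(x,z) = |z|^p + a(x)|z|^q`, `1 < p ≤ q`, on a ball
`B ⊆ Ω`: the nonlocal ellipticity ratio `R̄_F(z,B)` (quotient of the sup over `x ∈ B` of the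
highest eigenvalue of `∂_{zz}F(x,z)` by the inf over `x ∈ B` of the lowest eigenvalue,
eigenvalues being expressed through the Hessian quadratic form on the unit sphere)
satisfies `R̄_F(z,B) ≤ C(1 + ‖a‖_{L^∞(B)}|z|^{q−p})` for `|z| ≥ 1`; and if `a` vanishes
somewhere on `closure B`, then `‖a‖_{L^∞(B)}|z|^{q−p} ≤ C' R̄_F(z,B)` for `|z| ≥ 1`. -/
theorem double_phase_nonlocal_ellipticity_ratio (n : ℕ) (hn : 0 < n)
    (p q : ℝ) (hp : 1 < p) (hpq : p ≤ q)
    (Ω : Set (EuclideanSpace ℝ (Fin n))) (a : EuclideanSpace ℝ (Fin n) → ℝ)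
    (ha : ∀ x, 0 ≤ a x)
    (x₀ : EuclideanSpace ℝ (Fin n)) (ρ : ℝ) (hρ : 0 < ρ)
    (hB : Metric.ball x₀ ρ ⊆ Ω)
    (haC : ContinuousOn a (closure (Metric.ball x₀ ρ))) :
    let B : Set (EuclideanSpace ℝ (Fin n)) := Metric.ball x₀ ρ
    let Q : EuclideanSpace ℝ (Fin n) → EuclideanSpace ℝ (Fin n) →
        EuclideanSpace ℝ (Fin n) → ℝ := fun x z ξ =>
      iteratedFDeriv ℝ 2
        (fun w : EuclideanSpace ℝ (Fin n) => ‖w‖ ^ p + a x * ‖w‖ ^ q) z ![ξ, ξ]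
    let Rbar : EuclideanSpace ℝ (Fin n) → ℝ := fun z =>
      sSup {t | ∃ x ∈ B, ∃ ξ : EuclideanSpace ℝ (Fin n), ‖ξ‖ = 1 ∧ t = Q x z ξ} /
        sInf {t | ∃ x ∈ B, ∃ ξ : EuclideanSpace ℝ (Fin n), ‖ξ‖ = 1 ∧ t = Q x z ξ}
    let Na : ℝ := sSup (a '' B)
    (∃ C : ℝ, 0 < C ∧ ∀ z : EuclideanSpace ℝ (Fin n), 1 ≤ ‖z‖ →
        Rbar z ≤ C * (1 + Na * ‖z‖ ^ (q - p))) ∧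
      ((∃ x ∈ closure B, a x = 0) →
        ∃ C' : ℝ, 0 < C' ∧ ∀ z : EuclideanSpace ℝ (Fin n), 1 ≤ ‖z‖ →
          Na * ‖z‖ ^ (q - p) ≤ C' * Rbar z) :=
  double_phase_nonlocal_ellipticity_ratio_general n hn p q hp hpq a ha x₀ ρ hρ haC
end
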